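/- Let K be an algebraically closed field of characteristic zero and let q ∈ K be nonzero. Let R = K[h,s]/( 2h⁸ − 6h⁴s + 3s² , −11h¹² + 26h⁸s + 3hq ). Then: (i) the images of h and s generate a maximal ideal 𝔪₀ of R; (ii) the localization R_{𝔪₀} is isomorphic as a K-algebra to K[x]/(x²), the Jacobian ring of the simple hypersurface singularity of type A₂ given by f = x³; in particular R is not reduced; (iii) for every maximal ideal 𝔪 of R other than 𝔪₀, the localization R_𝔪 is isomorphic to K, so 𝔪₀ is the unique non-reduced point. -/

import Mathlib

open MvPolynomial

/-- The ideal of relations of the small quantum cohomology of the coadjoint variety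
`F₄/P₄`, in the variables `h = X 0`, `s = X 1`. -/
noncomputable def relF4 (K : Type) [Field K] (q : K) : Ideal (MvPolynomial (Fin 2) K) :=
  Ideal.span
    { 2 * X 0 ^ 8 - 6 * X 0 ^ 4 * X 1 + 3 * X 1 ^ 2,
      -11 * X 0 ^ 12 + 26 * X 0 ^ 8 * X 1 + 3 * C q * X 0 }

/-- The ideal of `QH(F₄/P₄)` generated by the images of `h`, `s`. -/
noncomputable def mF4 (K : Type) [Field K] (q : K) :
    Ideal (MvPolynomial (Fin 2) K ⧸ relF4 K q) :=
  Ideal.span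
    { Ideal.Quotient.mk (relF4 K q) (X 0),
      Ideal.Quotient.mk (relF4 K q) (X 1) }

/-!
Eliminating `s` from the two relations gives `W(h) = h²² - 270 q h¹¹ - 27 q²` with `h · W(h)` and
`s² · W(h)` in the relation ideal. At `𝔪₀ = (h, s)` the element `W(h)` is a unit, since
`W(0) = -27 q² ≠ 0`; hence `h = 0` and `s² = 0` in the localization, and `s ↦ x` identifies it
with `K[x]/(x²)`, the inverse being induced by `h ↦ 0, s ↦ x`. At any other point `(a, b)` the
first relation forces `a ≠ 0`, so `h` is a unit and `W(h) = 0` locally. As `q ≠ 0`, `a` is a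
simple root of `W`, which forces `h = a` locally; the second relation then solves for `s`, so the
localization is `K`.
-/

namespace MvPolynomial

theorem idealOfVars_eq_ker_constantCoeff {σ R : Type*} [CommRing R] :
    idealOfVars σ R = RingHom.ker (constantCoeff (σ := σ) (R := R)) := by
  ext p
  rw [← pow_one (idealOfVars σ R), mem_pow_idealOfVars_iff', RingHom.mem_ker, constantCoeff_eq]
  simp [Finsupp.degree_eq_zero_iff]

variable {σ K : Type*} [Field K]

theorem isMaximal_idealOfVars : (idealOfVars σ K).IsMaximal := by
  rw [idealOfVars_eq_ker_constantCoeff]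
  exact RingHom.ker_isMaximal_of_surjective _ fun c => ⟨C c, constantCoeff_C σ c⟩

theorem isMaximal_map_idealOfVars {I : Ideal (MvPolynomial σ K)} (hI : I ≤ idealOfVars σ K) :
    ((idealOfVars σ K).map (Ideal.Quotient.mk I)).IsMaximal :=
  have := isMaximal_idealOfVars (σ := σ) (K := K)
  Ideal.IsMaximal.map_of_surjective_of_ker_le Ideal.Quotient.mk_surjective (by rwa [Ideal.mk_ker])

theorem mk_mem_map_idealOfVars_iff {I : Ideal (MvPolynomial σ K)} (hI : I ≤ idealOfVars σ K)
    {p : MvPolynomial σ K} :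
    Ideal.Quotient.mk I p ∈ (idealOfVars σ K).map (Ideal.Quotient.mk I) ↔ constantCoeff p = 0 := by
  rw [← Ideal.mem_comap, Ideal.comap_map_of_surjective' _ Ideal.Quotient.mk_surjective,
    Ideal.mk_ker, sup_of_le_left hI, idealOfVars_eq_ker_constantCoeff, RingHom.mem_ker]

theorem exists_mk_mem_iff_eval_eq_zero [IsAlgClosed K] [Finite σ] {I : Ideal (MvPolynomial σ K)}
    {𝔪 : Ideal (MvPolynomial σ K ⧸ I)} (h𝔪 : 𝔪.IsMaximal) :
    ∃ x : σ → K, ∀ p, Ideal.Quotient.mk I p ∈ 𝔪 ↔ eval x p = 0 := by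
  obtain ⟨x, hx⟩ := eq_vanishingIdeal_singleton_of_isMaximal K
    (Ideal.comap_isMaximal_of_surjective _ Ideal.Quotient.mk_surjective (K := 𝔪))
  exact ⟨x, fun p => by rw [← Ideal.mem_comap, hx, mem_vanishingIdeal_singleton_iff]; rfl⟩

theorem eval_eq_zero_of_mem {I : Ideal (MvPolynomial σ K)} {𝔪 : Ideal (MvPolynomial σ K ⧸ I)}
    {x : σ → K} (hx : ∀ p, Ideal.Quotient.mk I p ∈ 𝔪 ↔ eval x p = 0) {p : MvPolynomial σ K}
    (hp : p ∈ I) : eval x p = 0 :=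
  (hx p).mp (Ideal.Quotient.eq_zero_iff_mem.mpr hp ▸ 𝔪.zero_mem)

theorem eval_aeval_X (x : σ → K) (i : σ) (p : Polynomial K) :
    eval x (Polynomial.aeval (X i) p) = p.eval (x i) := by
  simpa [Polynomial.coe_aeval_eq_eval, coe_aeval_eq_eval] using
    (Polynomial.aeval_algHom_apply (aeval x : MvPolynomial σ K →ₐ[K] K) (X i) p).symm

section Localization

variable {I : Ideal (MvPolynomial σ K)} (𝔪 : Ideal (MvPolynomial σ K ⧸ I)) [𝔪.IsPrime]

noncomputable def toLocalizationAtPrime : MvPolynomial σ K →ₐ[K] Localization.AtPrime 𝔪 :=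
  (IsScalarTower.toAlgHom K (MvPolynomial σ K ⧸ I) _).comp (Ideal.Quotient.mkₐ K I)

variable {𝔪}

theorem toLocalizationAtPrime_eq_zero {p : MvPolynomial σ K} (hp : p ∈ I) :
    toLocalizationAtPrime 𝔪 p = 0 := by
  simp [toLocalizationAtPrime, Ideal.Quotient.eq_zero_iff_mem.mpr hp]

theorem isUnit_toLocalizationAtPrime {p : MvPolynomial σ K} (hp : Ideal.Quotient.mk I p ∉ 𝔪) :
    IsUnit (toLocalizationAtPrime 𝔪 p) :=
  IsLocalization.map_units (Localization.AtPrime 𝔪) (⟨_, hp⟩ : 𝔪.primeCompl)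

theorem toLocalizationAtPrime_eq_zero_of_mul_mem {p u : MvPolynomial σ K}
    (hu : IsUnit (toLocalizationAtPrime 𝔪 u)) (h : p * u ∈ I) : toLocalizationAtPrime 𝔪 p = 0 := by
  simpa [hu.mul_left_eq_zero] using toLocalizationAtPrime_eq_zero (𝔪 := 𝔪) h

theorem nonempty_algEquiv_of_toLocalizationAtPrime_X (c : σ → K)
    (hc : ∀ i, toLocalizationAtPrime 𝔪 (X i) = algebraMap K _ (c i)) :
    Nonempty (Localization.AtPrime 𝔪 ≃ₐ[K] K) := by
  have hφ : ∀ p, toLocalizationAtPrime 𝔪 p = algebraMap K _ (eval c p) := by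
    have : toLocalizationAtPrime 𝔪 = (Algebra.ofId K _).comp (aeval c) :=
      algHom_ext fun i => by simp [hc]
    exact fun p => by rw [this]; rfl
  have hsurj : Function.Surjective (algebraMap K (Localization.AtPrime 𝔪)) := by
    intro z
    obtain ⟨r, u, rfl⟩ := IsLocalization.exists_mk'_eq 𝔪.primeCompl z
    obtain ⟨r, rfl⟩ := Ideal.Quotient.mk_surjective r
    obtain ⟨u', hu'⟩ := Ideal.Quotient.mk_surjective (u : MvPolynomial σ K ⧸ I)
    have hu : algebraMap _ (Localization.AtPrime 𝔪) (u : MvPolynomial σ K ⧸ I) =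
        algebraMap K _ (eval c u') := by rw [← hu', ← hφ]; rfl
    have hne : eval c u' ≠ 0 := fun h => not_isUnit_zero (M₀ := Localization.AtPrime 𝔪) <| by
      simpa [hu, h] using IsLocalization.map_units (Localization.AtPrime 𝔪) u
    refine ⟨eval c r / eval c u', (IsLocalization.mk'_eq_iff_eq_mul.mpr ?_).symm⟩
    rw [hu, ← map_mul, div_mul_cancel₀ _ hne, ← hφ]
    rfl
  exact ⟨(AlgEquiv.ofBijective (Algebra.ofId K _)
    ⟨(algebraMap K (Localization.AtPrime 𝔪)).injective, hsurj⟩).symm⟩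

end Localization

end MvPolynomial

namespace Polynomial

variable {R : Type*} [CommRing R]

theorem isUnit_mk_span_X_pow {p : R[X]} (n : ℕ) (hp : IsUnit (p.coeff 0)) :
    IsUnit (Ideal.Quotient.mk (Ideal.span {(X : R[X]) ^ n}) p) := by
  obtain ⟨g, hg⟩ := X_dvd_sub_C (p := p)
  have hnil : IsNilpotent (Ideal.Quotient.mk (Ideal.span {(X : R[X]) ^ n}) (X * g)) :=
    ⟨n, by
      rw [← map_pow, Ideal.Quotient.eq_zero_iff_mem, mul_pow]
      exact Ideal.mul_mem_right _ _ (Ideal.mem_span_singleton_self _)⟩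
  rw [show p = C (p.coeff 0) + X * g by rw [← hg]; ring, map_add]
  exact hnil.isUnit_add_left_of_commute ((hp.map C).map (Ideal.Quotient.mk _)) (Commute.all _ _)

theorem not_isReduced_quotient_span_X_pow [Nontrivial R] {n : ℕ} (hn : 2 ≤ n) :
    ¬ IsReduced (R[X] ⧸ Ideal.span {(X : R[X]) ^ n}) := by
  intro
  have hX : Ideal.Quotient.mk (Ideal.span {(X : R[X]) ^ n}) X = 0 := IsReduced.eq_zero _
    ⟨n, by rw [← map_pow, Ideal.Quotient.eq_zero_iff_mem]; exact Ideal.mem_span_singleton_self _⟩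
  rw [Ideal.Quotient.eq_zero_iff_mem, Ideal.mem_span_singleton, X_pow_dvd_iff] at hX
  simpa using hX 1 (by omega)

theorem eval_divByMonic_X_sub_C_self (p : R[X]) (a : R) :
    (p /ₘ (X - C a)).eval a = (derivative p).eval a := by
  simpa using congrArg (eval a) (divByMonic_add_X_sub_C_mul_derivative_divByMonic_eq_derivative p a)

theorem eq_algebraMap_of_aeval_eq_zero {A : Type*} [CommRing A] [Algebra R A] {p : R[X]} {a : R}
    (ha : p.IsRoot a) {x : A} (hx : aeval x p = 0) (hu : IsUnit (aeval x (p /ₘ (X - C a)))) :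
    x = algebraMap R A a := by
  rwa [← mul_divByMonic_eq_iff_isRoot.mpr ha, map_mul, hu.mul_left_eq_zero, map_sub, aeval_X,
    aeval_C, sub_eq_zero] at hx

theorem span_derivative_X_pow_succ {n : ℕ} (hn : IsUnit ((n + 1 : ℕ) : R)) :
    Ideal.span {derivative ((X : R[X]) ^ (n + 1))} = Ideal.span {(X : R[X]) ^ n} := by
  rw [derivative_X_pow, Nat.add_sub_cancel]
  exact Ideal.span_singleton_mul_left_unit (hn.map C) _

end Polynomial

section F4

variable {K : Type} [Field K]

theorem relF4_le_idealOfVars (q : K) : relF4 K q ≤ idealOfVars (Fin 2) K := by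
  rw [relF4, Ideal.span_le, idealOfVars_eq_ker_constantCoeff]
  rintro _ (rfl | rfl) <;> simp

theorem mF4_eq_map_idealOfVars (q : K) :
    mF4 K q = (idealOfVars (Fin 2) K).map (Ideal.Quotient.mk (relF4 K q)) := by
  rw [mF4, Ideal.map_span, ← Set.range_comp]
  congr 1
  ext
  simp [Fin.exists_fin_two, eq_comm]

instance mF4_isMaximal (q : K) : (mF4 K q).IsMaximal :=
  mF4_eq_map_idealOfVars q ▸ isMaximal_map_idealOfVars (relF4_le_idealOfVars q)

theorem mk_mem_mF4_iff {q : K} {p : MvPolynomial (Fin 2) K} :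
    Ideal.Quotient.mk (relF4 K q) p ∈ mF4 K q ↔ constantCoeff p = 0 := by
  rw [mF4_eq_map_idealOfVars, mk_mem_map_idealOfVars_iff (relF4_le_idealOfVars q)]

noncomputable def elimF4 (q : K) : Polynomial K :=
  Polynomial.X ^ 22 - 270 * Polynomial.C q * Polynomial.X ^ 11 - 27 * Polynomial.C (q ^ 2)

theorem aeval_X0_elimF4 (q : K) : Polynomial.aeval (X 0) (elimF4 q) =
    (X 0 ^ 22 - 270 * C q * X 0 ^ 11 - 27 * C q ^ 2 : MvPolynomial (Fin 2) K) := by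
  simp only [elimF4, map_sub, map_mul, map_pow, map_ofNat, Polynomial.aeval_X, Polynomial.aeval_C,
    algebraMap_eq]

theorem X0_mul_elimF4_mem (q : K) :
    X 0 * Polynomial.aeval (X 0) (elimF4 q) ∈ relF4 K q :=
  Ideal.mem_span_pair.mpr ⟨-676 * X 0 ^ 15, -123 * X 0 ^ 11 + 78 * X 0 ^ 7 * X 1 - 9 * C q, by
    rw [aeval_X0_elimF4]; ring⟩

theorem X1_sq_mul_elimF4_mem [CharZero K] (q : K) :
    X 1 ^ 2 * Polynomial.aeval (X 0) (elimF4 q) ∈ relF4 K q := by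
  set W : MvPolynomial (Fin 2) K := Polynomial.aeval (X 0) (elimF4 q)
  have h3 : C (3⁻¹ : K) * 3 = (1 : MvPolynomial (Fin 2) K) := by
    rw [← map_ofNat C 3, ← map_mul, inv_mul_cancel₀ three_ne_zero, map_one]
  have hW : X 1 ^ 2 * W = C 3⁻¹ * (W * (2 * X 0 ^ 8 - 6 * X 0 ^ 4 * X 1 + 3 * X 1 ^ 2) -
      (2 * X 0 ^ 7 - 6 * X 0 ^ 3 * X 1) * (X 0 * W)) := by
    linear_combination (-(X 1 ^ 2 * W)) * h3
  rw [hW]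
  exact Ideal.mul_mem_left _ _ (sub_mem (Ideal.mul_mem_left _ _ (Ideal.subset_span (Or.inl rfl)))
    (Ideal.mul_mem_left _ _ (X0_mul_elimF4_mem q)))

theorem eval_derivative_elimF4_ne_zero [CharZero K] {q a : K} (hq : q ≠ 0) (ha : a ≠ 0)
    (hroot : (elimF4 q).IsRoot a) : (Polynomial.derivative (elimF4 q)).eval a ≠ 0 := by
  simp only [elimF4, Polynomial.IsRoot.def, Polynomial.eval_sub, Polynomial.eval_mul,
    Polynomial.eval_pow, Polynomial.eval_X, Polynomial.eval_C, Polynomial.eval_ofNat] at hroot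
  simp only [elimF4, Polynomial.derivative_sub, Polynomial.derivative_mul, Polynomial.derivative_C,
    Polynomial.derivative_X_pow, Polynomial.derivative_ofNat, Polynomial.eval_sub,
    Polynomial.eval_add, Polynomial.eval_mul, Polynomial.eval_pow, Polynomial.eval_X,
    Polynomial.eval_C, Polynomial.eval_ofNat, Polynomial.eval_zero]
  intro h
  have h11 : a ^ 11 = 135 * q := by
    have : a ^ 10 * (22 * a ^ 11 - 2970 * q) = 0 := by linear_combination h
    linear_combination ((mul_eq_zero.mp this).resolve_left (pow_ne_zero _ ha)) / 22
  have : (18252 : K) * q ^ 2 = 0 := by linear_combination -hroot + (a ^ 11 - 135 * q) * h11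
  simp [hq] at this

abbrev JacobianRingA2 (K : Type) [Field K] : Type :=
  Polynomial K ⧸ Ideal.span {(Polynomial.X : Polynomial K) ^ 2}

theorem coeff_zero_aeval_zero_X (p : MvPolynomial (Fin 2) K) :
    (aeval ![0, Polynomial.X] p).coeff 0 = constantCoeff p := by
  induction p using MvPolynomial.induction_on with
  | C c => simp
  | add p r hp hr => simp [hp, hr]
  | mul_X p i hp => fin_cases i <;> simp [hp]

noncomputable def toJacobianRingA2 (q : K) :
    MvPolynomial (Fin 2) K ⧸ relF4 K q →ₐ[K] JacobianRingA2 K :=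
  Ideal.Quotient.liftₐ _ ((Ideal.Quotient.mkₐ K _).comp (aeval ![0, Polynomial.X])) <| by
    have : relF4 K q ≤ RingHom.ker ((Ideal.Quotient.mkₐ K
        (Ideal.span {(Polynomial.X : Polynomial K) ^ 2})).comp
        (aeval ![0, (Polynomial.X : Polynomial K)])) := by
      rw [relF4, Ideal.span_le]
      rintro _ (rfl | rfl) <;> simp
    exact fun p hp => this hp

theorem isUnit_toJacobianRingA2 {q : K} {u : MvPolynomial (Fin 2) K ⧸ relF4 K q}
    (hu : u ∉ mF4 K q) : IsUnit (toJacobianRingA2 q u) := by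
  obtain ⟨u, rfl⟩ := Ideal.Quotient.mk_surjective u
  rw [mk_mem_mF4_iff] at hu
  apply Polynomial.isUnit_mk_span_X_pow
  show IsUnit ((aeval ![0, Polynomial.X] u).coeff 0)
  rw [coeff_zero_aeval_zero_X]
  exact Ne.isUnit hu

section LocalizationAtMF4

variable [CharZero K] {q : K}

theorem isUnit_toLocalizationAtPrime_elimF4 (hq : q ≠ 0) :
    IsUnit (toLocalizationAtPrime (mF4 K q) (Polynomial.aeval (X 0) (elimF4 q))) :=
  isUnit_toLocalizationAtPrime <| by
    rw [mk_mem_mF4_iff, aeval_X0_elimF4]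
    simp only [map_sub, map_mul, map_pow, map_ofNat, constantCoeff_X, constantCoeff_C]
    simp [hq]

theorem toLocalizationAtPrime_mF4_X0_eq_zero (hq : q ≠ 0) :
    toLocalizationAtPrime (mF4 K q) (X 0) = 0 :=
  toLocalizationAtPrime_eq_zero_of_mul_mem (isUnit_toLocalizationAtPrime_elimF4 hq)
    (X0_mul_elimF4_mem q)

theorem toLocalizationAtPrime_mF4_X1_sq_eq_zero (hq : q ≠ 0) :
    toLocalizationAtPrime (mF4 K q) (X 1) ^ 2 = 0 := by
  rw [← map_pow]
  exact toLocalizationAtPrime_eq_zero_of_mul_mem (isUnit_toLocalizationAtPrime_elimF4 hq)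
    (X1_sq_mul_elimF4_mem q)

noncomputable def JacobianRingA2.toLocalizationAtMF4 (hq : q ≠ 0) :
    JacobianRingA2 K →ₐ[K] Localization.AtPrime (mF4 K q) :=
  Ideal.Quotient.liftₐ _ (Polynomial.aeval (toLocalizationAtPrime (mF4 K q) (X 1))) fun p hp => by
    obtain ⟨r, rfl⟩ := Ideal.mem_span_singleton'.mp hp
    simp [toLocalizationAtPrime_mF4_X1_sq_eq_zero hq]

noncomputable def localizationAtMF4ToJacobianRingA2 :
    Localization.AtPrime (mF4 K q) →ₐ[K] JacobianRingA2 K :=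
  IsLocalization.liftAlgHom (M := (mF4 K q).primeCompl) (f := toJacobianRingA2 q)
    fun u => isUnit_toJacobianRingA2 u.2

theorem JacobianRingA2.toLocalizationAtMF4_mk_X (hq : q ≠ 0) :
    JacobianRingA2.toLocalizationAtMF4 hq (Ideal.Quotient.mk _ Polynomial.X) =
      toLocalizationAtPrime (mF4 K q) (X 1) :=
  Polynomial.aeval_X _

omit [CharZero K] in
theorem localizationAtMF4ToJacobianRingA2_toLocalizationAtPrime (p : MvPolynomial (Fin 2) K) :
    localizationAtMF4ToJacobianRingA2 (toLocalizationAtPrime (mF4 K q) p) =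
      Ideal.Quotient.mk _ (aeval ![0, Polynomial.X] p) :=
  IsLocalization.lift_eq _ _

theorem nonempty_algEquiv_localizationAtMF4 (hq : q ≠ 0) :
    Nonempty (Localization.AtPrime (mF4 K q) ≃ₐ[K] JacobianRingA2 K) := by
  refine ⟨AlgEquiv.ofAlgHom localizationAtMF4ToJacobianRingA2
    (JacobianRingA2.toLocalizationAtMF4 hq) ?_ ?_⟩
  · apply Ideal.Quotient.algHom_ext
    apply Polynomial.algHom_ext
    simp [JacobianRingA2.toLocalizationAtMF4_mk_X,
      localizationAtMF4ToJacobianRingA2_toLocalizationAtPrime]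
  · apply IsLocalization.algHom_ext (mF4 K q).primeCompl
    apply Ideal.Quotient.algHom_ext
    apply MvPolynomial.algHom_ext
    intro i
    change JacobianRingA2.toLocalizationAtMF4 hq
      (localizationAtMF4ToJacobianRingA2 (toLocalizationAtPrime (mF4 K q) (X i))) =
        toLocalizationAtPrime (mF4 K q) (X i)
    fin_cases i
    · simp [toLocalizationAtPrime_mF4_X0_eq_zero hq]
    · simp [localizationAtMF4ToJacobianRingA2_toLocalizationAtPrime,
        JacobianRingA2.toLocalizationAtMF4_mk_X]

theorem not_isReduced_quotient_relF4 (hq : q ≠ 0) :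
    ¬ IsReduced (MvPolynomial (Fin 2) K ⧸ relF4 K q) := fun _ => by
  obtain ⟨e⟩ := nonempty_algEquiv_localizationAtMF4 hq
  exact Polynomial.not_isReduced_quotient_span_X_pow le_rfl
    (isReduced_of_injective e.symm e.symm.injective)

end LocalizationAtMF4

section OtherPoints

variable [CharZero K] {q : K} {𝔪 : Ideal (MvPolynomial (Fin 2) K ⧸ relF4 K q)} {x : Fin 2 → K}

theorem eval_X0_ne_zero_of_ne_mF4 (hm : 𝔪.IsMaximal) (hne : 𝔪 ≠ mF4 K q)
    (hx : ∀ p, Ideal.Quotient.mk _ p ∈ 𝔪 ↔ eval x p = 0) : x 0 ≠ 0 := by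
  intro h0
  have h1 : x 1 = 0 := by
    have := eval_eq_zero_of_mem hx (Ideal.subset_span (Or.inl rfl) :
      2 * X 0 ^ 8 - 6 * X 0 ^ 4 * X 1 + 3 * X 1 ^ 2 ∈ relF4 K q)
    simpa [h0] using this
  refine hne ((mF4_isMaximal q).eq_of_le hm.ne_top ?_).symm
  rw [mF4, Ideal.span_le]
  rintro _ (rfl | rfl) <;> simp [hx, h0, h1]

theorem toLocalizationAtPrime_X0_eq_algebraMap [𝔪.IsPrime] (hq : q ≠ 0)
    (hx : ∀ p, Ideal.Quotient.mk _ p ∈ 𝔪 ↔ eval x p = 0) (hx0 : x 0 ≠ 0) :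
    toLocalizationAtPrime 𝔪 (X 0) = algebraMap K _ (x 0) := by
  have hunit : IsUnit (toLocalizationAtPrime 𝔪 (X 0)) :=
    isUnit_toLocalizationAtPrime (by rwa [hx, eval_X])
  have hroot : (elimF4 q).IsRoot (x 0) := by
    have := eval_eq_zero_of_mem hx (X0_mul_elimF4_mem q)
    rwa [map_mul, eval_X, eval_aeval_X, mul_eq_zero, or_iff_right hx0] at this
  refine Polynomial.eq_algebraMap_of_aeval_eq_zero (A := Localization.AtPrime 𝔪) hroot ?_ ?_
  · rw [Polynomial.aeval_algHom_apply]
    exact toLocalizationAtPrime_eq_zero_of_mul_mem hunit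
      (mul_comm (X 0 : MvPolynomial (Fin 2) K) _ ▸ X0_mul_elimF4_mem q)
  · rw [Polynomial.aeval_algHom_apply]
    apply isUnit_toLocalizationAtPrime
    rw [hx, eval_aeval_X, Polynomial.eval_divByMonic_X_sub_C_self]
    exact eval_derivative_elimF4_ne_zero hq hx0 hroot

theorem toLocalizationAtPrime_X1_eq_algebraMap [𝔪.IsPrime] {a : K} (ha : a ≠ 0)
    (h0 : toLocalizationAtPrime 𝔪 (X 0) = algebraMap K _ a) :
    toLocalizationAtPrime 𝔪 (X 1) = algebraMap K _ ((11 * a ^ 12 - 3 * q * a) / (26 * a ^ 8)) := by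
  have e := toLocalizationAtPrime_eq_zero (𝔪 := 𝔪) (Ideal.subset_span (Or.inr rfl) :
    -11 * X 0 ^ 12 + 26 * X 0 ^ 8 * X 1 + 3 * C q * X 0 ∈ relF4 K q)
  simp only [map_add, map_mul, map_pow, map_neg, map_ofNat, h0, algHom_C] at e
  have h26 : (26 * a ^ 8 : K) ≠ 0 := by simp [ha]
  refine ((Ne.isUnit h26).map (algebraMap K (Localization.AtPrime 𝔪))).mul_left_cancel ?_
  rw [← map_mul, mul_div_cancel₀ _ h26]
  simp only [map_mul, map_sub, map_pow, map_ofNat]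
  rw [← sub_eq_zero, ← e]
  ring

theorem nonempty_algEquiv_localization_of_ne_mF4 [IsAlgClosed K] (hq : q ≠ 0) (hm : 𝔪.IsMaximal)
    (hne : 𝔪 ≠ mF4 K q) [𝔪.IsPrime] : Nonempty (Localization.AtPrime 𝔪 ≃ₐ[K] K) := by
  obtain ⟨x, hx⟩ := exists_mk_mem_iff_eval_eq_zero hm
  have hx0 := eval_X0_ne_zero_of_ne_mF4 hm hne hx
  have h0 := toLocalizationAtPrime_X0_eq_algebraMap hq hx hx0
  exact nonempty_algEquiv_of_toLocalizationAtPrime_X ![x 0, _]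
    (Fin.forall_fin_two.mpr ⟨h0, toLocalizationAtPrime_X1_eq_algebraMap hx0 h0⟩)

end OtherPoints

end F4

set_option synthInstance.maxHeartbeats 1000000 in
theorem stmt_8 (K : Type) [Field K] [IsAlgClosed K] [CharZero K] (q : K) (hq : q ≠ 0) :
    (∃ hm : (mF4 K q).IsMaximal,
      haveI := hm.isPrime
      Nonempty ((Localization.AtPrime (mF4 K q)) ≃ₐ[K]
        (Polynomial K ⧸ Ideal.span {(Polynomial.X : Polynomial K) ^ 2}))) ∧
    Ideal.span {(Polynomial.X : Polynomial K) ^ 2} =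
      Ideal.span {Polynomial.derivative ((Polynomial.X : Polynomial K) ^ 3)} ∧
    ¬ IsReduced (MvPolynomial (Fin 2) K ⧸ relF4 K q) ∧
    ∀ (𝔪 : Ideal (MvPolynomial (Fin 2) K ⧸ relF4 K q)) (hm : 𝔪.IsMaximal),
      𝔪 ≠ mF4 K q →
      haveI := hm.isPrime
      Nonempty ((Localization.AtPrime 𝔪) ≃ₐ[K] K) := by
  refine ⟨⟨mF4_isMaximal q, nonempty_algEquiv_localizationAtMF4 hq⟩,
    (Polynomial.span_derivative_X_pow_succ (n := 2) ?_).symm, not_isReduced_quotient_relF4 hq,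
    fun 𝔪 hm hne => ?_⟩
  · exact (Nat.cast_ne_zero.mpr (by norm_num)).isUnit
  · have := hm.isPrime
    exact nonempty_algEquiv_localization_of_ne_mF4 hq hm hne
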